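/- For k ≥ 1 and m ≥ 1, the language L_m = {a^{5mk(1+nm)} | n ≥ 0} over the single letter a is generated by the k-limited propagating D0L system with axiom a^{5mk} and rule a → a a^{5m²}: a k-limited step applied to a^N with N ≥ k adds exactly 5m²k letters, so the word derived in n steps from the axiom is a^{5mk + 5m²kn} = a^{5mk(1+nm)}. -/

import Mathlib

/-- One k-limited derivation step: for each letter x, exactly min(k, |v|_x) occurrences
of x in v are rewritten, each by some rule of R with left side x; the remaining
occurrences stay unchanged. -/
def klStep {V : Type*} [DecidableEq V] (k : ℕ) (R : Set (V × List V)) (v w : List V) : Prop :=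
  ∃ (S : Finset (Fin v.length)) (f : Fin v.length → List V),
    (∀ x : V, (S.filter (fun i => v.get i = x)).card = min k (v.count x)) ∧
    (∀ i ∈ S, (v.get i, f i) ∈ R) ∧
    (∀ i, i ∉ S → f i = [v.get i]) ∧
    w = (List.ofFn f).flatten

/-- Deterministic k-limited step with rule function P. -/
def detStep {V : Type*} [DecidableEq V] (k : ℕ) (P : V → List V) : List V → List V → Prop :=
  klStep k {p | p.2 = P p.1}

/-- The language generated from axiom ω by a step relation. -/
def lang {V : Type*} (step : List V → List V → Prop) (ω : List V) : Set (List V) :=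
  {w | Relation.ReflTransGen step ω w}

/-!
Over a one-letter alphabet a word is determined by its length. If the current word has length
`N ≥ k`, a `k`-limited step rewrites exactly `k` letters, each into `1 + M` letters, so the length
grows by exactly `k * M`; as lengths never decrease, `N ≥ k` persists. Hence the words derived
from `a^N` are exactly those of length `N + n * (k * M)`, and with `N = 5mk`, `M = 5m²` these are
the lengths `5mk(1 + nm)`.
-/

lemma List.eq_of_length_eq_unit {v w : List Unit} (h : v.length = w.length) : v = w :=
  List.ext_get h fun _ _ _ => rfl

lemma List.eq_replicate_unit_iff {w : List Unit} {n : ℕ} :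
    w = List.replicate n () ↔ w.length = n := by
  simp [List.eq_replicate_iff]

lemma List.length_flatten_ofFn_of_card {α : Type*} {n M : ℕ} (S : Finset (Fin n))
    (f : Fin n → List α) (hS : ∀ i ∈ S, (f i).length = 1 + M)
    (hnotS : ∀ i ∉ S, (f i).length = 1) :
    (List.ofFn f).flatten.length = n + S.card * M := by
  have hlen : ∀ i, (f i).length = 1 + if i ∈ S then M else 0 := by
    intro i
    by_cases hi : i ∈ S <;> simp [hi, hS, hnotS]
  simp only [List.length_flatten, List.map_ofFn, List.sum_ofFn, Function.comp_apply, hlen,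
    Finset.sum_add_distrib, Finset.sum_ite_mem, Finset.univ_inter]
  simp

lemma klStep_unit_card_iff {k : ℕ} {v : List Unit} {S : Finset (Fin v.length)} :
    (∀ x : Unit, (S.filter (fun i => v.get i = x)).card = min k (v.count x)) ↔
      S.card = min k v.length := by
  have hcount : v.count () = v.length := List.count_eq_length.mpr fun _ _ => rfl
  simp [hcount]

theorem detStep_unit_iff {k M : ℕ} {v w : List Unit} :
    detStep k (fun _ : Unit => List.replicate (1 + M) ()) v w ↔
      w.length = v.length + min k v.length * M := by
  constructor
  · rintro ⟨S, f, hcard, hrule, hkeep, rfl⟩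
    rw [← klStep_unit_card_iff.mp hcard]
    refine List.length_flatten_ofFn_of_card (M := M) S f (fun i hi => ?_)
      fun i hi => by simp [hkeep i hi]
    rw [show f i = _ from hrule i hi, List.length_replicate]
  · intro hw
    obtain ⟨S, -, hS⟩ := Finset.exists_subset_card_eq
      (s := (Finset.univ : Finset (Fin v.length))) (n := min k v.length) (by simp)
    let f : Fin v.length → List Unit := fun i =>
      if i ∈ S then List.replicate (1 + M) () else [()]
    refine ⟨S, f, klStep_unit_card_iff.mpr hS, fun i hi => by simp [f, hi],
      fun i hi => by simp [f, hi], List.eq_of_length_eq_unit ?_⟩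
    rw [hw, List.length_flatten_ofFn_of_card (M := M) S f (fun i hi => by simp [f, hi])
      (fun i hi => by simp [f, hi]), hS]

theorem lang_detStep_unit {k M N : ℕ} (hk : k ≤ N) :
    lang (detStep k (fun _ : Unit => List.replicate (1 + M) ())) (List.replicate N ()) =
      {w | ∃ n : ℕ, w.length = N + n * (k * M)} := by
  ext w
  constructor
  · intro hw
    induction hw with
    | refl => exact ⟨0, by simp⟩
    | tail _ hstep ih =>
      obtain ⟨n, hn⟩ := ih
      refine ⟨n + 1, ?_⟩
      rw [detStep_unit_iff.mp hstep, hn, min_eq_left (by omega)]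
      ring
  · rintro ⟨n, hn⟩
    rw [← List.eq_replicate_unit_iff] at hn
    subst hn
    induction n with
    | zero => rw [zero_mul, add_zero]; exact Relation.ReflTransGen.refl
    | succ n ih =>
      refine ih.tail (detStep_unit_iff.mpr ?_)
      simp only [List.length_replicate, min_eq_left (hk.trans (Nat.le_add_right _ _))]
      ring

theorem stmt12_general (k m : ℕ) (hm : 1 ≤ m) :
    lang (detStep k (fun _ : Unit => List.replicate (1 + 5 * m ^ 2) ()))
        (List.replicate (5 * m * k) ()) =
      {w | ∃ n : ℕ, w = List.replicate (5 * m * k * (1 + n * m)) ()} := by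
  have hk : k ≤ 5 * m * k := Nat.le_mul_of_pos_left k (by omega)
  rw [lang_detStep_unit hk]
  ext w
  simp only [Set.mem_ofPred_eq, List.eq_replicate_unit_iff]
  have hlen : ∀ n : ℕ, 5 * m * k + n * (k * (5 * m ^ 2)) = 5 * m * k * (1 + n * m) := by
    intro n; ring
  simp only [hlen]

/-- Over the one-letter alphabet, the kℓPD0L system with axiom a^{5mk} and rule
a → a a^{5m²} generates exactly L_m = {a^{5mk(1+nm)} | n ≥ 0}. -/
theorem stmt12 (k m : ℕ) (hk : 1 ≤ k) (hm : 1 ≤ m) :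
    lang (detStep k (fun _ : Unit => List.replicate (1 + 5 * m ^ 2) ()))
        (List.replicate (5 * m * k) ()) =
      {w | ∃ n : ℕ, w = List.replicate (5 * m * k * (1 + n * m)) ()} :=
  stmt12_general k m hm
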